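/- arXiv:1012.5832 — 6 statements merged into one kernel-verified Lean document; each statement's English description precedes it below -/
import Mathlib

section
/- Suppose θ > -∞ and for each product j there exist r_j ≥ 1, κ_j ∈ ℝ, and p̄_j ≥ 0 such that w_j(p) ≤ -r_j log p + κ_j for all p > p̄_j. Then the revenue term P_j(p) p_j is bounded above (uniformly over p with p_j large): specifically P_j(p) p_j ≤ p_j^{1-r_j} e^{κ_j + v_j - θ} for p_j > p̄_j. Moreover, if r_j > 1 for all j, then firm f's profit π̂_f(p) = Σ_{j∈J_f} P_j(p)(p_j - c_j) tends to 0 as all prices p_j, j ∈ J_f, tend to ∞. -/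
open Filter Set

theorem stmt_3 {J : ℕ} (w : Fin J → ℝ → ℝ) (v : Fin J → ℝ) (θ : ℝ)
    (c : Fin J → ℝ) (Jf : Finset (Fin J)) (hc : ∀ j, 0 ≤ c j)
    (r κ pbar : Fin J → ℝ)
    (hr : ∀ j, 1 ≤ r j) (hpbar : ∀ j, 0 ≤ pbar j)
    (hbound : ∀ j, ∀ p > pbar j, w j p ≤ -(r j) * Real.log p + κ j) :
    let P : (Fin J → ℝ) → Fin J → ℝ := fun p j =>
      Real.exp (w j (p j) + v j) / (Real.exp θ + ∑ k, Real.exp (w k (p k) + v k))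
    (∀ p : Fin J → ℝ, (∀ k, 0 ≤ p k) → ∀ j, pbar j < p j →
      P p j * p j ≤ p j ^ (1 - r j) * Real.exp (κ j + v j - θ)) ∧
    ((∀ j, 1 < r j) →
      ∀ pseq : ℕ → Fin J → ℝ, (∀ n k, 0 ≤ pseq n k) →
        (∀ j ∈ Jf, Tendsto (fun n => pseq n j) atTop atTop) →
        Tendsto (fun n => ∑ j ∈ Jf, P (pseq n) j * (pseq n j - c j)) atTop (nhds 0)) := by
  intro P
  have hPnonneg : ∀ p j, 0 ≤ P p j := by
    intro p j
    apply div_nonneg (Real.exp_pos _).le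
    have h0 : 0 ≤ ∑ k, Real.exp (w k (p k) + v k) :=
      Finset.sum_nonneg fun k _ => (Real.exp_pos _).le
    linarith [Real.exp_pos θ]
  have key : ∀ p : Fin J → ℝ, (∀ k, 0 ≤ p k) → ∀ j, pbar j < p j →
      P p j * p j ≤ p j ^ (1 - r j) * Real.exp (κ j + v j - θ) := by
    intro p hp j hj
    have hpj : 0 < p j := lt_of_le_of_lt (hpbar j) hj
    have hden : Real.exp θ ≤ Real.exp θ + ∑ k, Real.exp (w k (p k) + v k) := by
      have h0 : 0 ≤ ∑ k, Real.exp (w k (p k) + v k) :=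
        Finset.sum_nonneg fun k _ => (Real.exp_pos _).le
      linarith
    have hP : P p j ≤ Real.exp (w j (p j) + v j) / Real.exp θ := by
      apply div_le_div_of_nonneg_left (Real.exp_pos _).le (Real.exp_pos θ) hden
    have hw := hbound j (p j) hj
    have h1 : Real.exp (w j (p j) + v j) / Real.exp θ
        ≤ p j ^ (-(r j)) * Real.exp (κ j + v j - θ) := by
      rw [Real.rpow_def_of_pos hpj, ← Real.exp_add, div_eq_mul_inv, ← Real.exp_neg,
        ← Real.exp_add]
      apply Real.exp_le_exp.2
      nlinarith [Real.log_le_sub_one_of_pos hpj]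
    have hP2 : P p j ≤ p j ^ (-(r j)) * Real.exp (κ j + v j - θ) := hP.trans h1
    calc P p j * p j ≤ (p j ^ (-(r j)) * Real.exp (κ j + v j - θ)) * p j := by
          exact mul_le_mul_of_nonneg_right hP2 hpj.le
      _ = p j ^ (1 - r j) * Real.exp (κ j + v j - θ) := by
          rw [show (1 : ℝ) - r j = -(r j) + 1 by ring, Real.rpow_add hpj,
            Real.rpow_one]
          ring
  refine ⟨key, ?_⟩
  intro hr1 pseq hpos hto
  have hterm : ∀ j ∈ Jf, Tendsto (fun n => P (pseq n) j * (pseq n j - c j)) atTop (nhds 0) := by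
    intro j hj
    have htop := hto j hj
    have hub : Tendsto (fun n => pseq n j ^ (1 - r j) * Real.exp (κ j + v j - θ))
        atTop (nhds 0) := by
      have h0 : Tendsto (fun x : ℝ => x ^ (-(r j - 1))) atTop (nhds 0) :=
        tendsto_rpow_neg_atTop (by linarith [hr1 j])
      have := (h0.comp htop).mul_const (Real.exp (κ j + v j - θ))
      simpa [Function.comp, show -(r j - 1) = 1 - r j by ring] using this
    apply tendsto_of_tendsto_of_tendsto_of_le_of_le' tendsto_const_nhds hub
    · filter_upwards [htop.eventually_ge_atTop (c j)] with n hn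
      exact mul_nonneg (hPnonneg _ _) (by linarith)
    · filter_upwards [htop.eventually_gt_atTop (pbar j)] with n hn
      have h1 : P (pseq n) j * (pseq n j - c j) ≤ P (pseq n) j * pseq n j := by
        apply mul_le_mul_of_nonneg_left _ (hPnonneg _ _)
        linarith [hc j]
      exact h1.trans (key (pseq n) (hpos n) j hn)
  have := tendsto_finset_sum Jf hterm
  simpa using this
end

section
/- Suppose θ > -∞ and for some product j ∈ J_f there exist r ∈ (0,1), κ ∈ ℝ, and p̄ ≥ 0 such that w_j(p) ≥ -r log p + κ for all p > p̄. Then firm f's profit π̂_f(p) tends to +∞ along any sequence of prices in which p_j → ∞ and the remaining prices converge in [0,∞]. -/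
/-!
The denominator of the logit shares is largest at zero prices, so product `j`'s share is
at least a constant times `exp (w_j p_j)`, which by the growth hypothesis is at least a
constant times `p_j ^ (-r)`. Its profit contribution therefore grows like `p_j ^ (1 - r)`,
while every other term `P_i (p_i - c_i)` stays above `-|c_i|` because shares lie in `[0, 1]`
and prices are nonnegative.
-/

open Filter Set

theorem Filter.Tendsto.sum_atTop_of_isBoundedUnder_ge {α ι G : Type*} [AddCommGroup G]
    [PartialOrder G] [IsOrderedAddMonoid G] {l : Filter α} {s : Finset ι} {f : ι → α → G}
    {j : ι} (hj : j ∈ s) (hfj : Tendsto (f j) l atTop)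
    (hf : ∀ i ∈ s, i ≠ j → IsBoundedUnder (· ≥ ·) l (f i)) :
    Tendsto (fun x => ∑ i ∈ s, f i x) l atTop := by
  classical
  obtain ⟨C, hC⟩ := isBoundedUnder_ge_sum (s.erase j) fun i hi =>
    hf i (Finset.mem_of_mem_erase hi) (Finset.ne_of_mem_erase hi)
  simp_rw [← s.add_sum_erase _ hj]
  exact tendsto_atTop_add_right_of_le' l C hfj (by simpa using hC)

lemma tendsto_rpow_neg_mul_sub_atTop {r : ℝ} (hr : r < 1) (c : ℝ) :
    Tendsto (fun q : ℝ => q ^ (-r) * (q - c)) atTop atTop := by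
  refine tendsto_atTop_mono' _ ?_ ((tendsto_rpow_atTop (sub_pos.2 hr)).const_mul_atTop one_half_pos)
  filter_upwards [eventually_gt_atTop 0, eventually_ge_atTop (2 * c)] with q hq hqc
  calc 1 / 2 * q ^ (1 - r) = q ^ (-r) * (q / 2) := by
        rw [← neg_add_eq_sub, Real.rpow_add_one hq.ne']; ring
    _ ≤ q ^ (-r) * (q - c) := by gcongr; linarith

lemma rpow_neg_mul_exp_le_exp {q r κ w : ℝ} (hq : 0 < q) (hw : -r * Real.log q + κ ≤ w) :
    q ^ (-r) * Real.exp κ ≤ Real.exp w := by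
  rw [Real.rpow_def_of_pos hq, ← Real.exp_add]
  exact Real.exp_le_exp.2 (by linarith)

section Logit

variable {ι : Type*} [Fintype ι]

noncomputable def logitShare (θ : ℝ) (u : ι → ℝ) (i : ι) : ℝ :=
  Real.exp (u i) / (Real.exp θ + ∑ k, Real.exp (u k))

lemma logitShare_nonneg (θ : ℝ) (u : ι → ℝ) (i : ι) : 0 ≤ logitShare θ u i := by
  unfold logitShare; positivity

lemma logitShare_le_one (θ : ℝ) (u : ι → ℝ) (i : ι) : logitShare θ u i ≤ 1 := by
  rw [logitShare, div_le_one (by positivity)]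
  have := Finset.single_le_sum (fun k _ => (Real.exp_pos (u k)).le) (Finset.mem_univ i)
  linarith [Real.exp_pos θ]

lemma div_le_logitShare {θ : ℝ} {u U : ι → ℝ} (hU : ∀ k, u k ≤ U k) (i : ι) :
    Real.exp (u i) / (Real.exp θ + ∑ k, Real.exp (U k)) ≤ logitShare θ u i :=
  div_le_div_of_nonneg_left (Real.exp_nonneg _) (by positivity) (by gcongr with k; exact hU k)

lemma neg_abs_le_logitShare_mul_sub (θ : ℝ) (u : ι → ℝ) (i : ι) {p : ℝ} (hp : 0 ≤ p)
    (c : ℝ) : -|c| ≤ logitShare θ u i * (p - c) := by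
  have h0 := logitShare_nonneg θ u i
  have h1 := logitShare_le_one θ u i
  nlinarith [le_abs_self c, abs_nonneg c]

lemma tendsto_logitShare_mul_sub_atTop {α : Type*} {l : Filter α} {θ r κ c : ℝ}
    {u : α → ι → ℝ} {U : ι → ℝ} {p : α → ℝ} {j : ι} (hU : ∀ x k, u x k ≤ U k)
    (hp : Tendsto p l atTop) (hr : r < 1) (hu : ∀ᶠ x in l, -r * Real.log (p x) + κ ≤ u x j) :
    Tendsto (fun x => logitShare θ (u x) j * (p x - c)) l atTop := by
  set D := Real.exp θ + ∑ k, Real.exp (U k)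
  have hA : 0 < Real.exp κ / D := by positivity
  refine tendsto_atTop_mono' _ ?_
    (((tendsto_rpow_neg_mul_sub_atTop hr c).comp hp).const_mul_atTop hA)
  filter_upwards [hu, hp.eventually_gt_atTop 0, hp.eventually_ge_atTop c] with x hux hx hxc
  calc Real.exp κ / D * ((p x) ^ (-r) * (p x - c))
      = (p x) ^ (-r) * Real.exp κ / D * (p x - c) := by ring
    _ ≤ Real.exp (u x j) / D * (p x - c) := by
        gcongr
        exact rpow_neg_mul_exp_le_exp hx hux
    _ ≤ logitShare θ (u x) j * (p x - c) := by
        gcongr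
        exact div_le_logitShare (hU x) j

end Logit

theorem stmt_4_general {J : ℕ} (w : Fin J → ℝ → ℝ) (v : Fin J → ℝ) (θ : ℝ)
    (c : Fin J → ℝ) (Jf : Finset (Fin J)) (j : Fin J) (hj : j ∈ Jf)
    (hanti : ∀ k, StrictAntiOn (w k) (Set.Ici (0:ℝ)))
    (r κ pbar : ℝ) (hr1 : r < 1)
    (hbound : ∀ p > pbar, w j p ≥ -r * Real.log p + κ) :
    let P : (Fin J → ℝ) → Fin J → ℝ := fun p i =>
      Real.exp (w i (p i) + v i) / (Real.exp θ + ∑ k, Real.exp (w k (p k) + v k))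
    ∀ pseq : ℕ → Fin J → ℝ, (∀ n k, 0 ≤ pseq n k) →
      Tendsto (fun n => pseq n j) atTop atTop →
      (∀ k, k ≠ j →
        (∃ L : ℝ, Tendsto (fun n => pseq n k) atTop (nhds L)) ∨
          Tendsto (fun n => pseq n k) atTop atTop) →
      Tendsto (fun n => ∑ i ∈ Jf, P (pseq n) i * (pseq n i - c i)) atTop atTop := by
  intro P pseq hpos hjtop _
  have hu : ∀ n k, w k (pseq n k) + v k ≤ w k 0 + v k := fun n k => by
    gcongr
    exact (hanti k).antitoneOn self_mem_Ici (hpos n k) (hpos n k)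
  have hgrowth : ∀ᶠ n in atTop,
      -r * Real.log (pseq n j) + (κ + v j) ≤ w j (pseq n j) + v j := by
    filter_upwards [hjtop.eventually_gt_atTop pbar] with n hn
    linarith [hbound _ hn]
  change Tendsto (fun n => ∑ i ∈ Jf,
    logitShare θ (fun k => w k (pseq n k) + v k) i * (pseq n i - c i)) atTop atTop
  refine Tendsto.sum_atTop_of_isBoundedUnder_ge hj
    (tendsto_logitShare_mul_sub_atTop hu hjtop hr1 hgrowth) fun i _ _ => ?_
  exact isBoundedUnder_of
    ⟨-|c i|, fun n => neg_abs_le_logitShare_mul_sub θ _ i (hpos n i) (c i)⟩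

theorem stmt_4 {J : ℕ} (w : Fin J → ℝ → ℝ) (v : Fin J → ℝ) (θ : ℝ)
    (c : Fin J → ℝ) (Jf : Finset (Fin J)) (j : Fin J) (hj : j ∈ Jf)
    (hcont : ∀ k, ContinuousOn (w k) (Set.Ici (0:ℝ)))
    (hanti : ∀ k, StrictAntiOn (w k) (Set.Ici (0:ℝ)))
    (r κ pbar : ℝ) (hr0 : 0 < r) (hr1 : r < 1) (hpbar : 0 ≤ pbar)
    (hbound : ∀ p > pbar, w j p ≥ -r * Real.log p + κ) :
    let P : (Fin J → ℝ) → Fin J → ℝ := fun p i =>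
      Real.exp (w i (p i) + v i) / (Real.exp θ + ∑ k, Real.exp (w k (p k) + v k))
    ∀ pseq : ℕ → Fin J → ℝ, (∀ n k, 0 ≤ pseq n k) →
      Tendsto (fun n => pseq n j) atTop atTop →
      (∀ k, k ≠ j →
        (∃ L : ℝ, Tendsto (fun n => pseq n k) atTop (nhds L)) ∨
          Tendsto (fun n => pseq n k) atTop atTop) →
      Tendsto (fun n => ∑ i ∈ Jf, P (pseq n) i * (pseq n i - c i)) atTop atTop :=
  stmt_4_general w v θ c Jf j hj hanti r κ pbar hr1 hbound
end

section
/- Under the Logit model with constant unit costs, firm f's profit gradient factors as (∇_f π̂_f)(p) = Λ_f(p) φ_f(p) where Λ_f(p) = diag(w_j'(p_j) P_j(p))_{j∈J_f} and φ_f(p) = p_f - c_f - ζ_f(p) with ζ_j(p) = π̂_f(p) - 1/w_j'(p_j). In particular, since each diagonal entry of Λ_f(p) is nonzero for p ∈ (0,∞)^J, any local maximizer p_f ∈ (0,∞)^{J_f} of π̂_f(·, p_{-f}) satisfies the fixed-point equation p_j = c_j + π̂_f(p) + 1/|w_j'(p_j)| for all j ∈ J_f. -/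
/-!
Along the coordinate `p_j` (with `j ∈ J_f`) all other quantities are constant, so the profit is
`(A + e(x) (x - c_j)) / (B + e(x))` with `e(x) = exp (w_j x + v_j)` and `e' = w_j' e`. The quotient
rule gives the derivative `w_j' P_j (x - c_j - (π̂_f - 1 / w_j'))`. At an interior local maximum it
vanishes, and `w_j' P_j ≠ 0`, so the second factor vanishes; since `w_j' < 0`, `-1 / w_j' = 1 / |w_j'|`.
-/

open Finset Function Real

theorem Finset.sum_apply_update_of_mem {ι : Type*} [DecidableEq ι] {s : Finset ι} {j : ι}
    (hj : j ∈ s) (F : ι → ℝ → ℝ) (p : ι → ℝ) (x : ℝ) :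
    ∑ k ∈ s, F k (update p j x k) = (∑ k ∈ s, F k (p k) - F j (p j)) + F j x := by
  simp_rw [apply_update F p j x, sum_update_of_mem hj, ← add_sum_erase s _ hj,
    sdiff_singleton_eq_erase]
  ring

theorem IsLocalMax.comp_update {ι α β : Type*} [DecidableEq ι] [TopologicalSpace β] [Preorder α]
    {F : (ι → β) → α} {p : ι → β} (hF : IsLocalMax F p) (j : ι) :
    IsLocalMax (fun x => F (update p j x)) (p j) := by
  rw [← update_eq_self j p] at hF
  exact hF.comp_continuous (continuous_const.update j continuous_id).continuousAt

theorem hasDerivAt_add_mul_sub_div_add {f e : ℝ → ℝ} {A B c r x : ℝ}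
    (hf : ∀ y, f y = (A + e y * (y - c)) / (B + e y)) (he : HasDerivAt e (e x * r) x)
    (hr : r ≠ 0) (hD : B + e x ≠ 0) :
    HasDerivAt f ((r * (e x / (B + e x))) * (x - c - (f x - r⁻¹))) x := by
  have hN : HasDerivAt (fun y => A + e y * (y - c)) (e x * r * (x - c) + e x) x := by
    simpa using (he.mul ((hasDerivAt_id x).sub_const c)).const_add A
  rw [show f = _ from funext hf]
  refine (hN.div (he.const_add B) hD).congr_deriv ?_
  beta_reduce
  field_simp
  ring

namespace Logit

variable {ι : Type*} [Fintype ι] (w : ι → ℝ → ℝ) (v : ι → ℝ) (θ : ℝ)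

noncomputable def denom (p : ι → ℝ) : ℝ := exp θ + ∑ k, exp (w k (p k) + v k)

noncomputable def share (p : ι → ℝ) (j : ι) : ℝ := exp (w j (p j) + v j) / denom w v θ p

noncomputable def profit (s : Finset ι) (c p : ι → ℝ) : ℝ :=
  ∑ j ∈ s, share w v θ p j * (p j - c j)

variable {w v θ}

theorem denom_pos (p : ι → ℝ) : 0 < denom w v θ p := by
  unfold denom; positivity

theorem share_pos (p : ι → ℝ) (j : ι) : 0 < share w v θ p j :=
  div_pos (exp_pos _) (denom_pos p)

theorem profit_eq_div (s : Finset ι) (c p : ι → ℝ) :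
    profit w v θ s c p = (∑ k ∈ s, exp (w k (p k) + v k) * (p k - c k)) / denom w v θ p := by
  simp only [profit, share, sum_div, div_mul_eq_mul_div]

variable [DecidableEq ι]

theorem hasDerivAt_profit_update {s : Finset ι} {c p : ι → ℝ} {j : ι} (hj : j ∈ s) {d : ℝ}
    (hw : HasDerivAt (w j) d (p j)) (hd : d ≠ 0) :
    HasDerivAt (fun x => profit w v θ s c (update p j x))
      ((d * share w v θ p j) * (p j - c j - (profit w v θ s c p - d⁻¹))) (p j) := by
  set E : ℝ → ℝ := fun x => exp (w j x + v j)
  have hden : ∀ x, denom w v θ (update p j x) = (denom w v θ p - E (p j)) + E x := by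
    intro x
    simp only [denom, sum_apply_update_of_mem (mem_univ j) (fun k y => exp (w k y + v k))]
    ring
  have hrestrict : ∀ x, profit w v θ s c (update p j x) =
      ((∑ k ∈ s, exp (w k (p k) + v k) * (p k - c k) - E (p j) * (p j - c j)) + E x * (x - c j)) /
        ((denom w v θ p - E (p j)) + E x) := by
    intro x
    rw [profit_eq_div, hden,
      sum_apply_update_of_mem hj (fun k y => exp (w k y + v k) * (y - c k))]
  have hE : HasDerivAt E (E (p j) * d) (p j) := (hw.add_const (v j)).exp
  have h := hasDerivAt_add_mul_sub_div_add hrestrict hE hd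
    (by rw [sub_add_cancel]; exact (denom_pos p).ne')
  rw [sub_add_cancel, update_eq_self] at h
  exact h

end Logit

theorem stmt_7_general {J : ℕ} (w w' : Fin J → ℝ → ℝ) (v : Fin J → ℝ) (θ : ℝ)
    (c : Fin J → ℝ) (Jf : Finset (Fin J))
    (hderiv : ∀ k : Fin J, ∀ x > (0:ℝ), HasDerivAt (w k) (w' k x) x)
    (hneg : ∀ k : Fin J, ∀ x > (0:ℝ), w' k x < 0) :
    let P : (Fin J → ℝ) → Fin J → ℝ := fun p j =>
      Real.exp (w j (p j) + v j) / (Real.exp θ + ∑ k, Real.exp (w k (p k) + v k))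
    let profit : (Fin J → ℝ) → ℝ := fun p => ∑ j ∈ Jf, P p j * (p j - c j)
    -- gradient factorization: D_j π̂_f = λ_j(p) * φ_j(p)
    (∀ p : Fin J → ℝ, (∀ i, 0 < p i) → ∀ j ∈ Jf,
      HasDerivAt (fun x => profit (Function.update p j x))
        ((w' j (p j) * P p j) * (p j - c j - (profit p - (w' j (p j))⁻¹))) (p j)) ∧
    -- fixed-point equation at any interior local maximizer of the firm's profit
    (∀ p : Fin J → ℝ, (∀ i, 0 < p i) →
      IsLocalMax (fun q : Fin J → ℝ =>
        profit (fun i => if i ∈ Jf then q i else p i)) p →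
      ∀ j ∈ Jf, p j = c j + profit p + |w' j (p j)|⁻¹) := by
  intro P profit
  have hgrad : ∀ p : Fin J → ℝ, (∀ i, 0 < p i) → ∀ j ∈ Jf,
      HasDerivAt (fun x => profit (update p j x))
        ((w' j (p j) * P p j) * (p j - c j - (profit p - (w' j (p j))⁻¹))) (p j) :=
    fun p hp j hj => Logit.hasDerivAt_profit_update hj (hderiv j _ (hp j)) (hneg j _ (hp j)).ne
  refine ⟨hgrad, fun p hp hmax j hj => ?_⟩
  have hlocal : IsLocalMax (fun x => profit (update p j x)) (p j) := by
    convert hmax.comp_update j using 3 with x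
    change update p j x = Jf.piecewise (update p j x) p
    rw [← update_piecewise_of_mem Jf p p hj, Finset.piecewise_same]
  have hw' := hneg j _ (hp j)
  have hP : 0 < P p j := Logit.share_pos p j
  have hfoc := hlocal.hasDerivAt_eq_zero (hgrad p hp j hj)
  rw [mul_eq_zero, or_iff_right (mul_ne_zero hw'.ne hP.ne')] at hfoc
  rw [abs_of_neg hw', inv_neg]
  linarith

theorem stmt_7 {J : ℕ} (w w' : Fin J → ℝ → ℝ) (v : Fin J → ℝ) (θ : ℝ)
    (c : Fin J → ℝ) (Jf : Finset (Fin J)) (hc : ∀ j, 0 ≤ c j)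
    (hderiv : ∀ k : Fin J, ∀ x > (0:ℝ), HasDerivAt (w k) (w' k x) x)
    (hneg : ∀ k : Fin J, ∀ x > (0:ℝ), w' k x < 0) :
    let P : (Fin J → ℝ) → Fin J → ℝ := fun p j =>
      Real.exp (w j (p j) + v j) / (Real.exp θ + ∑ k, Real.exp (w k (p k) + v k))
    let profit : (Fin J → ℝ) → ℝ := fun p => ∑ j ∈ Jf, P p j * (p j - c j)
    -- gradient factorization: D_j π̂_f = λ_j(p) * φ_j(p)
    (∀ p : Fin J → ℝ, (∀ i, 0 < p i) → ∀ j ∈ Jf,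
      HasDerivAt (fun x => profit (Function.update p j x))
        ((w' j (p j) * P p j) * (p j - c j - (profit p - (w' j (p j))⁻¹))) (p j)) ∧
    -- fixed-point equation at any interior local maximizer of the firm's profit
    (∀ p : Fin J → ℝ, (∀ i, 0 < p i) →
      IsLocalMax (fun q : Fin J → ℝ =>
        profit (fun i => if i ∈ Jf then q i else p i)) p →
      ∀ j ∈ Jf, p j = c j + profit p + |w' j (p j)|⁻¹) :=
  stmt_7_general w w' v θ c Jf hderiv hneg
end

section
/- Suppose θ > -∞, each w_j is continuously differentiable and strictly decreasing, and each w_j eventually decreases sufficiently quickly (∃ r_j > 1, p̄_j with w_j'(p) ≤ -r_j/p for p > p̄_j). Define φ_j(p) = p_j - c_j - ζ_j(p) with ζ_j(p) = π̂_{f(j)}(p) + 1/|w_j'(p_j)|. Then: (i) if p ≥ c and p_j = c_j, φ_j(p) < 0; (ii) there exists p̄ ∈ (c,∞)^J such that φ_j(p) > 0 whenever p_j ≥ p̄_j, regardless of the other prices. Consequently the vector field φ points outward on the boundary of the rectangle [c, p̄], and by the Poincaré–Hopf theorem there exists at least one p ∈ (c, p̄) with φ(p) = 0, i.e., a simultaneously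 stationary price vector p = c + ζ(p). -/
open Filter Set

private lemma aux_deriv_eq (X Wd B A C0 cj t0 : ℝ) (hDv : C0 + X ≠ 0) (hWd : Wd ≠ 0) :
    ((X * Wd * (t0 - cj) + X * 1) * B * (C0 + X) - (X * (t0 - cj) + A) * B * (X * Wd))
        / (C0 + X) ^ 2
      = B * X * Wd * (t0 - cj - ((X * (t0 - cj) + A) / (C0 + X) + -Wd⁻¹)) / (C0 + X) := by
  field_simp
  ring

set_option maxHeartbeats 2000000 in
theorem stmt_9 {J F : ℕ} (w w' : Fin J → ℝ → ℝ) (v : Fin J → ℝ) (θ : ℝ)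
    (c : Fin J → ℝ) (owner : Fin J → Fin F) (hc : ∀ j, 0 < c j)
    (hderiv : ∀ k : Fin J, ∀ x > (0:ℝ), HasDerivAt (w k) (w' k x) x)
    (hneg : ∀ k : Fin J, ∀ x > (0:ℝ), w' k x < 0)
    (hedsq : ∀ j : Fin J, ∃ r > (1:ℝ), ∃ pb : ℝ, ∀ p > pb, w' j p ≤ -r / p) :
    let P : (Fin J → ℝ) → Fin J → ℝ := fun p j =>
      Real.exp (w j (p j) + v j) / (Real.exp θ + ∑ k, Real.exp (w k (p k) + v k))
    let profit : Fin F → (Fin J → ℝ) → ℝ := fun g p =>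
      ∑ j ∈ Finset.univ.filter (fun j => owner j = g), P p j * (p j - c j)
    let φ : (Fin J → ℝ) → Fin J → ℝ := fun p j =>
      p j - c j - (profit (owner j) p + |w' j (p j)|⁻¹)
    -- (i) φ_j < 0 on the face p_j = c_j
    (∀ p : Fin J → ℝ, (∀ k, c k ≤ p k) → ∀ j, p j = c j → φ p j < 0) ∧
    -- (ii) φ_j > 0 for p_j large, regardless of other prices; and
    -- existence of a simultaneously stationary price vector in (c, p̄)
    (∃ pbar : Fin J → ℝ, (∀ j, c j < pbar j) ∧
      (∀ p : Fin J → ℝ, (∀ k, 0 ≤ p k) → ∀ j, pbar j ≤ p j → 0 < φ p j) ∧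
      (∃ p : Fin J → ℝ, (∀ j, c j < p j ∧ p j < pbar j) ∧ ∀ j, φ p j = 0)) := by
  classical
  intro P profit φ
  -- basic positivity of the denominator
  have hDpos : ∀ p : Fin J → ℝ, 0 < Real.exp θ + ∑ k, Real.exp (w k (p k) + v k) := by
    intro p
    have : (0:ℝ) ≤ ∑ k, Real.exp (w k (p k) + v k) :=
      Finset.sum_nonneg fun k _ => (Real.exp_pos _).le
    linarith [Real.exp_pos θ]
  have hPpos : ∀ p j, 0 < P p j := fun p j => div_pos (Real.exp_pos _) (hDpos p)
  -- Part (i)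
  have part1 : ∀ p : Fin J → ℝ, (∀ k, c k ≤ p k) → ∀ j, p j = c j → φ p j < 0 := by
    intro p hp j hj
    have hprof : 0 ≤ profit (owner j) p :=
      Finset.sum_nonneg fun k _ => mul_nonneg (hPpos p k).le (sub_nonneg.2 (hp k))
    have hpj : 0 < p j := lt_of_lt_of_le (hc j) (hp j)
    have hwj : w' j (p j) < 0 := hneg j (p j) hpj
    have hk : 0 < |w' j (p j)|⁻¹ := inv_pos.2 (abs_pos.2 hwj.ne)
    have : φ p j = p j - c j - (profit (owner j) p + |w' j (p j)|⁻¹) := rfl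
    rw [hj] at hk
    rw [this, hj]
    linarith
  -- choose tail data
  choose r hr pb hpb using hedsq
  set q : Fin J → ℝ := fun k => max (pb k) (c k) with hqdef
  have hq0 : ∀ k, 0 < q k := fun k => lt_of_lt_of_le (hc k) (le_max_right _ _)
  have hqc : ∀ k, c k ≤ q k := fun k => le_max_right _ _
  have hqpb : ∀ k, pb k ≤ q k := fun k => le_max_left _ _
  -- continuity of w on positive reals
  have hwcont : ∀ k, ContinuousOn (w k) (Set.Ioi (0:ℝ)) := by
    intro k
    exact fun x hx => ((hderiv k x hx).differentiableAt.continuousAt).continuousWithinAt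
  -- uniform bound for the numerator of each term of profit
  have key : ∀ k : Fin J, ∃ N : ℝ, 0 ≤ N ∧
      ∀ x : ℝ, 0 ≤ x → Real.exp (w k x + v k) * (x - c k) ≤ N := by
    intro k
    have hIcc : Set.Icc (c k) (q k) ⊆ Set.Ioi (0:ℝ) := fun x hx => lt_of_lt_of_le (hc k) hx.1
    have hcont : ContinuousOn (fun x => Real.exp (w k x + v k) * (x - c k))
        (Set.Icc (c k) (q k)) := by
      apply ContinuousOn.mul
      · exact Real.continuous_exp.comp_continuousOn
          (((hwcont k).mono hIcc).add continuousOn_const)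
      · exact continuousOn_id.sub continuousOn_const
    obtain ⟨x0, hx0mem, hx0max⟩ :=
      isCompact_Icc.exists_isMaxOn (Set.nonempty_Icc.2 (hqc k)) hcont
    set C : ℝ := Real.exp (w k (q k) + v k + r k * Real.log (q k)) with hC
    set T : ℝ := C * Real.exp ((1 - r k) * Real.log (q k)) with hT
    have hanti : AntitoneOn (fun x => w k x + r k * Real.log x) (Set.Ici (q k)) := by
      apply antitoneOn_of_deriv_nonpos (convex_Ici _)
      · apply ContinuousOn.add
        · exact (hwcont k).mono (fun x hx => lt_of_lt_of_le (hq0 k) hx)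
        · exact continuousOn_const.mul
            (Real.continuousOn_log.mono (fun x hx => ne_of_gt (lt_of_lt_of_le (hq0 k) hx)))
      · intro x hx
        rw [interior_Ici] at hx
        have hx0 : (0:ℝ) < x := lt_trans (hq0 k) hx
        exact ((hderiv k x hx0).add
          ((Real.hasDerivAt_log hx0.ne').const_mul (r k))).differentiableAt.differentiableWithinAt
      · intro x hx
        rw [interior_Ici] at hx
        have hx0 : (0:ℝ) < x := lt_trans (hq0 k) hx
        have hD : HasDerivAt (fun x => w k x + r k * Real.log x) (w' k x + r k * x⁻¹) x :=
          (hderiv k x hx0).add ((Real.hasDerivAt_log hx0.ne').const_mul (r k))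
        rw [hD.deriv]
        have hle := hpb k x (lt_of_le_of_lt (hqpb k) hx)
        have heq : -(r k) / x = -(r k * x⁻¹) := by ring
        rw [heq] at hle
        linarith
    refine ⟨max (max (Real.exp (w k x0 + v k) * (x0 - c k)) T) 0, le_max_right _ _, ?_⟩
    intro x hx
    rcases le_or_gt x (c k) with hxc | hxc
    · have : Real.exp (w k x + v k) * (x - c k) ≤ 0 :=
        mul_nonpos_of_nonneg_of_nonpos (Real.exp_pos _).le (by linarith)
      exact le_trans this (le_max_right _ _)
    rcases le_or_gt x (q k) with hxq | hxq
    · have hmem : x ∈ Set.Icc (c k) (q k) := ⟨hxc.le, hxq⟩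
      exact le_trans (le_trans (hx0max hmem) (le_max_left _ _)) (le_max_left _ _)
    · -- tail estimate
      have hx0 : (0:ℝ) < x := lt_trans (hq0 k) hxq
      have hmono := hanti (self_mem_Ici) (mem_Ici.2 hxq.le) hxq.le
      have h1 : w k x + v k ≤ (w k (q k) + v k + r k * Real.log (q k)) +
          (-(r k) * Real.log x) := by
        simp only [] at hmono
        linarith
      have h2 : Real.exp (w k x + v k) ≤ C * Real.exp (-(r k) * Real.log x) := by
        rw [hC, ← Real.exp_add]
        exact Real.exp_le_exp.2 h1
      have hCpos : 0 < C := Real.exp_pos _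
      have h3 : Real.exp (w k x + v k) * (x - c k) ≤ Real.exp (w k x + v k) * x := by
        have := (hc k).le
        exact mul_le_mul_of_nonneg_left (by linarith) (Real.exp_pos _).le
      have h4 : Real.exp (w k x + v k) * x ≤ (C * Real.exp (-(r k) * Real.log x)) * x :=
        mul_le_mul_of_nonneg_right h2 hx0.le
      have h5 : (C * Real.exp (-(r k) * Real.log x)) * x
          = C * Real.exp ((1 - r k) * Real.log x) := by
        have h5' : Real.exp ((1 - r k) * Real.log x)
            = Real.exp (-(r k) * Real.log x) * Real.exp (Real.log x) := by
          rw [← Real.exp_add]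
          ring_nf
        rw [Real.exp_log hx0] at h5'
        rw [mul_assoc, ← h5']
      have h6 : C * Real.exp ((1 - r k) * Real.log x) ≤ T := by
        rw [hT]
        apply mul_le_mul_of_nonneg_left _ hCpos.le
        apply Real.exp_le_exp.2
        have hlog : Real.log (q k) ≤ Real.log x := Real.log_le_log (hq0 k) hxq.le
        have : 1 - r k ≤ 0 := by linarith [hr k]
        nlinarith
      calc Real.exp (w k x + v k) * (x - c k) ≤ _ := h3
        _ ≤ _ := h4
        _ = _ := h5
        _ ≤ T := h6
        _ ≤ max (Real.exp (w k x0 + v k) * (x0 - c k)) T := le_max_right _ _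
        _ ≤ _ := le_max_left _ _
  choose N hN0 hNb using key
  set Mtot : ℝ := (∑ k, N k) / Real.exp θ with hMdef
  have hMtot0 : 0 ≤ Mtot := div_nonneg (Finset.sum_nonneg fun k _ => hN0 k) (Real.exp_pos θ).le
  have hprofle : ∀ (g : Fin F) (p : Fin J → ℝ), (∀ k, 0 ≤ p k) → profit g p ≤ Mtot := by
    intro g p hp
    have hstep : ∀ k ∈ Finset.univ.filter (fun k => owner k = g),
        P p k * (p k - c k) ≤ N k / Real.exp θ := by
      intro k _
      have hDp := hDpos p
      have hterm : P p k * (p k - c k) = Real.exp (w k (p k) + v k) * (p k - c k) /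
          (Real.exp θ + ∑ i, Real.exp (w i (p i) + v i)) := by
        simp only [P]
        ring
      rw [hterm]
      rcases le_or_gt 0 (Real.exp (w k (p k) + v k) * (p k - c k)) with hnn | hlt
      · have h1 : Real.exp θ ≤ Real.exp θ + ∑ i, Real.exp (w i (p i) + v i) :=
          le_add_of_nonneg_right (Finset.sum_nonneg fun i _ => (Real.exp_pos _).le)
        exact div_le_div₀ (hN0 k) (hNb k (p k) (hp k)) (Real.exp_pos θ) h1
      · exact le_trans (div_nonpos_of_nonpos_of_nonneg hlt.le hDp.le)
          (div_nonneg (hN0 k) (Real.exp_pos θ).le)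
    calc profit g p ≤ ∑ k ∈ Finset.univ.filter (fun k => owner k = g), N k / Real.exp θ :=
          Finset.sum_le_sum hstep
      _ ≤ ∑ k, N k / Real.exp θ :=
          Finset.sum_le_sum_of_subset_of_nonneg (Finset.filter_subset _ _)
            (fun k _ _ => div_nonneg (hN0 k) (Real.exp_pos θ).le)
      _ = Mtot := by rw [hMdef, Finset.sum_div]
  -- the cap on prices
  set pbar : Fin J → ℝ := fun j =>
    max ((c j + Mtot + 1) * (r j / (r j - 1))) (q j + 1) with hpbardef
  have hpbarc : ∀ j, c j < pbar j := by
    intro j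
    have : c j < q j + 1 := by linarith [hqc j]
    exact lt_of_lt_of_le this (le_max_right _ _)
  -- Part (ii), positivity bound
  have part2 : ∀ p : Fin J → ℝ, (∀ k, 0 ≤ p k) → ∀ j, pbar j ≤ p j → 0 < φ p j := by
    intro p hp j hpj
    have hq1 : q j + 1 ≤ pbar j := le_max_right _ _
    have hpbj : pb j < p j := by linarith [hqpb j]
    have hpj0 : 0 < p j := lt_of_lt_of_le (lt_of_lt_of_le (hc j) (hpbarc j).le) hpj
    have hw'le := hpb j (p j) hpbj
    have hwneg := hneg j (p j) hpj0
    have hrj := hr j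
    have hrpos : (0:ℝ) < r j := by linarith
    have habs : |w' j (p j)| = -(w' j (p j)) := abs_of_neg hwneg
    have hinv : |w' j (p j)|⁻¹ ≤ p j / r j := by
      rw [habs]
      have h1 : r j / p j ≤ -(w' j (p j)) := by
        have heq : -(r j) / (p j) = -(r j / p j) := by ring
        rw [heq] at hw'le
        linarith
      have h2 : 0 < r j / p j := div_pos hrpos hpj0
      calc (-(w' j (p j)))⁻¹ ≤ (r j / p j)⁻¹ := inv_anti₀ h2 h1
        _ = p j / r j := by rw [inv_div]
    have hprof := hprofle (owner j) p hp
    have hcap : (c j + Mtot + 1) * (r j / (r j - 1)) ≤ p j :=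
      le_trans (le_max_left _ _) hpj
    have hd : (0:ℝ) < r j - 1 := by linarith
    have harith : c j + Mtot + 1 ≤ p j - p j / r j := by
      have h3 : (c j + Mtot + 1) * r j ≤ p j * (r j - 1) := by
        have h5 := mul_le_mul_of_nonneg_right hcap hd.le
        rw [mul_assoc, div_mul_cancel₀ _ hd.ne'] at h5
        exact h5
      have h4 : p j - p j / r j = p j * (r j - 1) / r j := by
        field_simp
      rw [h4]
      exact (le_div_iff₀ hrpos).2 h3
    have hphi : φ p j = p j - c j - (profit (owner j) p + |w' j (p j)|⁻¹) := rfl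
    rw [hphi]
    linarith
  refine ⟨part1, pbar, hpbarc, part2, ?_⟩
  -- Existence of a stationary point via maximization of the potential
  set S : Finset (Fin F) := Finset.image owner Finset.univ with hSdef
  set e : Fin F → (Fin J → ℝ) → ℝ := fun f p =>
    ∑ k ∈ Finset.univ.filter (fun k => owner k = f),
      Real.exp (w k (p k) + v k) * (p k - c k) with hedef
  set D : (Fin J → ℝ) → ℝ := fun p => Real.exp θ + ∑ k, Real.exp (w k (p k) + v k) with hDdef
  set G : (Fin J → ℝ) → ℝ := fun p => (∏ f ∈ S, max (e f p) 0) / D p with hGdef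
  set K : Set (Fin J → ℝ) := Set.Icc c pbar with hKdef
  have hDpos' : ∀ p, 0 < D p := fun p => hDpos p
  have hKne : K.Nonempty := Set.nonempty_Icc.2 (fun j => (hpbarc j).le)
  have hKcpt : IsCompact K := isCompact_Icc
  have hKpos : ∀ p ∈ K, ∀ k, 0 < p k := fun p hp k => lt_of_lt_of_le (hc k) (hp.1 k)
  have hcoord : ∀ k, ContinuousOn (fun p : Fin J → ℝ => Real.exp (w k (p k) + v k)) K := by
    intro k
    apply Real.continuous_exp.comp_continuousOn
    apply ContinuousOn.add _ continuousOn_const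
    exact (hwcont k).comp (continuous_apply k).continuousOn (fun p hp => hKpos p hp k)
  have hecont : ∀ f, ContinuousOn (e f) K := by
    intro f
    apply continuousOn_finset_sum
    intro k _
    exact (hcoord k).mul (((continuous_apply k).continuousOn).sub continuousOn_const)
  have hDcont : ContinuousOn D K := by
    apply ContinuousOn.add continuousOn_const
    exact continuousOn_finset_sum _ (fun k _ => hcoord k)
  have hGcont : ContinuousOn G K := by
    apply ContinuousOn.div
    · exact continuousOn_finset_prod _ (fun f _ => (continuous_id.max continuous_const).comp_continuousOn (hecont f))
    · exact hDcont
    · exact fun p _ => (hDpos' p).ne'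
  obtain ⟨pm, hpmK, hpmmax⟩ := hKcpt.exists_isMaxOn hKne hGcont
  set p0 : Fin J → ℝ := fun j => (c j + pbar j) / 2 with hp0def
  have hp0K : p0 ∈ K := by
    constructor <;> intro j <;> (have := hpbarc j; simp only [hp0def]) <;> linarith
  have hSmem : ∀ j : Fin J, owner j ∈ S := fun j =>
    Finset.mem_image_of_mem owner (Finset.mem_univ j)
  have hep0 : ∀ f ∈ S, 0 < e f p0 := by
    intro f hf
    obtain ⟨j, _, hj⟩ := Finset.mem_image.1 hf
    apply Finset.sum_pos
    · intro k _
      have hck := hpbarc k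
      have h2 : 0 < p0 k - c k := by simp only [hp0def]; linarith
      exact mul_pos (Real.exp_pos _) h2
    · exact ⟨j, Finset.mem_filter.2 ⟨Finset.mem_univ j, hj⟩⟩
  have hGp0 : 0 < G p0 := by
    apply div_pos _ (hDpos' p0)
    apply Finset.prod_pos
    intro f hf
    rw [max_eq_left (hep0 f hf).le]
    exact hep0 f hf
  have hGpm : 0 < G pm := lt_of_lt_of_le hGp0 (hpmmax hp0K)
  have hDpm : 0 < D pm := hDpos' pm
  have hprodpos : 0 < ∏ f ∈ S, max (e f pm) 0 := by
    calc (0:ℝ) < G pm * D pm := mul_pos hGpm hDpm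
      _ = ∏ f ∈ S, max (e f pm) 0 := div_mul_cancel₀ _ hDpm.ne'
  have hepm : ∀ f ∈ S, 0 < e f pm := by
    intro f hf
    by_contra hle
    push_neg at hle
    have h0 : max (e f pm) 0 = 0 := max_eq_right hle
    have := Finset.prod_eq_zero (f := fun f => e f pm ⊔ 0) hf h0
    rw [this] at hprodpos
    exact lt_irrefl 0 hprodpos
  have main : ∀ j : Fin J, (c j < pm j ∧ pm j < pbar j) ∧ φ pm j = 0 := by
    intro j
    set t0 : ℝ := pm j with ht0
    have ht0pos : 0 < t0 := hKpos pm hpmK j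
    have hwj : w' j t0 < 0 := hneg j t0 ht0pos
    set f0 : Fin F := owner j with hf0
    have hf0S : f0 ∈ S := by rw [hf0]; exact hSmem j
    set A : ℝ := ∑ k ∈ (Finset.univ.filter (fun k => owner k = f0)).erase j,
        Real.exp (w k (pm k) + v k) * (pm k - c k) with hA
    set B : ℝ := ∏ f ∈ S.erase f0, e f pm with hB
    set C0 : ℝ := Real.exp θ + ∑ k ∈ Finset.univ.erase j,
        Real.exp (w k (pm k) + v k) with hC0def
    have hjmem : j ∈ Finset.univ.filter (fun k => owner k = f0) :=
      Finset.mem_filter.2 ⟨Finset.mem_univ j, rfl⟩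
    -- identity for the own-firm aggregate
    have hidE0 : ∀ t : ℝ, e f0 (Function.update pm j t)
        = Real.exp (w j t + v j) * (t - c j) + A := by
      intro t
      simp only [hedef]
      rw [← Finset.add_sum_erase _ _ hjmem]
      congr 1
      · rw [Function.update_self]
      · rw [hA]
        apply Finset.sum_congr rfl
        intro k hk
        rw [Function.update_of_ne (Finset.ne_of_mem_erase hk)]
    -- other firms' aggregates do not depend on p_j
    have hidE : ∀ (t : ℝ) (f : Fin F), f ≠ f0 → e f (Function.update pm j t) = e f pm := by
      intro t f hf
      simp only [hedef]
      apply Finset.sum_congr rfl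
      intro k hk
      have hkf : owner k = f := (Finset.mem_filter.1 hk).2
      have hkj : k ≠ j := by
        intro hkj
        apply hf
        rw [← hkf, hkj]
      rw [Function.update_of_ne hkj]
    -- denominator identity
    have hidD : ∀ t : ℝ, D (Function.update pm j t) = C0 + Real.exp (w j t + v j) := by
      intro t
      simp only [hDdef]
      rw [← Finset.add_sum_erase Finset.univ _ (Finset.mem_univ j)]
      rw [Function.update_self]
      have hrest : ∀ k ∈ Finset.univ.erase j,
          Real.exp (w k (Function.update pm j t k) + v k)
            = Real.exp (w k (pm k) + v k) := fun k hk => by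
        rw [Function.update_of_ne (Finset.ne_of_mem_erase hk)]
      rw [Finset.sum_congr rfl hrest, hC0def]
      ring
    -- product identity
    have hidProd : ∀ t : ℝ, 0 < Real.exp (w j t + v j) * (t - c j) + A →
        (∏ f ∈ S, max (e f (Function.update pm j t)) 0)
          = (Real.exp (w j t + v j) * (t - c j) + A) * B := by
      intro t hpos
      rw [← Finset.mul_prod_erase S _ hf0S]
      congr 1
      · rw [hidE0 t, max_eq_left hpos.le]
      · rw [hB]
        apply Finset.prod_congr rfl
        intro f hf
        rw [hidE t f (Finset.ne_of_mem_erase hf),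
          max_eq_left (hepm f (Finset.mem_of_mem_erase hf)).le]
    -- the one-dimensional section of G
    have hidG : ∀ t : ℝ, 0 < Real.exp (w j t + v j) * (t - c j) + A →
        G (Function.update pm j t)
          = (Real.exp (w j t + v j) * (t - c j) + A) * B
              / (C0 + Real.exp (w j t + v j)) := by
      intro t hpos
      simp only [hGdef]
      rw [hidProd t hpos, hidD t]
    -- derivative data
    have hX' : HasDerivAt (fun t => Real.exp (w j t + v j))
        (Real.exp (w j t0 + v j) * w' j t0) t0 :=
      ((hderiv j t0 ht0pos).add_const (v j)).exp
    have hhd : HasDerivAt (fun t => Real.exp (w j t + v j) * (t - c j))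
        (Real.exp (w j t0 + v j) * w' j t0 * (t0 - c j)
          + Real.exp (w j t0 + v j) * 1) t0 :=
      hX'.mul ((hasDerivAt_id t0).sub_const (c j))
    have hval : Real.exp (w j t0 + v j) * (t0 - c j) + A = e f0 pm := by
      rw [← hidE0 t0, ht0, Function.update_eq_self]
    have hposA : 0 < Real.exp (w j t0 + v j) * (t0 - c j) + A := by
      rw [hval]; exact hepm f0 hf0S
    have hDeq : C0 + Real.exp (w j t0 + v j) = D pm := by
      rw [← hidD t0, ht0, Function.update_eq_self]
    have hDvpos : 0 < C0 + Real.exp (w j t0 + v j) := by rw [hDeq]; exact hDpm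
    have hev : ∀ᶠ t in nhds t0, 0 < Real.exp (w j t + v j) * (t - c j) + A := by
      have hcont : ContinuousAt (fun t => Real.exp (w j t + v j) * (t - c j) + A) t0 :=
        (hhd.continuousAt).add continuousAt_const
      exact hcont.eventually (eventually_gt_nhds hposA)
    have hevEq : (fun t => G (Function.update pm j t)) =ᶠ[nhds t0]
        (fun t => (Real.exp (w j t + v j) * (t - c j) + A) * B
          / (C0 + Real.exp (w j t + v j))) :=
      hev.mono (fun t ht => hidG t ht)
    have hnum : HasDerivAt
        (fun t => (Real.exp (w j t + v j) * (t - c j) + A) * B)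
        ((Real.exp (w j t0 + v j) * w' j t0 * (t0 - c j)
          + Real.exp (w j t0 + v j) * 1) * B) t0 :=
      (hhd.add_const A).mul_const B
    have hden : HasDerivAt (fun t => C0 + Real.exp (w j t + v j))
        (Real.exp (w j t0 + v j) * w' j t0) t0 := hX'.const_add C0
    have hgtd := hnum.div hden hDvpos.ne'
    have hgd : HasDerivAt (fun t => G (Function.update pm j t))
        (((Real.exp (w j t0 + v j) * w' j t0 * (t0 - c j)
            + Real.exp (w j t0 + v j) * 1) * B * (C0 + Real.exp (w j t0 + v j))
          - (Real.exp (w j t0 + v j) * (t0 - c j) + A) * B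
              * (Real.exp (w j t0 + v j) * w' j t0))
          / (C0 + Real.exp (w j t0 + v j)) ^ 2) t0 :=
      hgtd.congr_of_eventuallyEq hevEq
    -- express φ at pm
    have hprofeq : profit f0 pm = (Real.exp (w j t0 + v j) * (t0 - c j) + A)
        / (C0 + Real.exp (w j t0 + v j)) := by
      rw [hval, hDeq]
      show (∑ k ∈ Finset.univ.filter (fun k => owner k = f0),
        Real.exp (w k (pm k) + v k) / D pm * (pm k - c k)) = e f0 pm / D pm
      simp only [hedef]
      rw [Finset.sum_div]
      apply Finset.sum_congr rfl
      intro k _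
      ring
    have habs : |w' j t0|⁻¹ = -(w' j t0)⁻¹ := by
      rw [abs_of_neg hwj, inv_neg]
    have hphi : φ pm j = t0 - c j
        - ((Real.exp (w j t0 + v j) * (t0 - c j) + A)
            / (C0 + Real.exp (w j t0 + v j)) + -(w' j t0)⁻¹) := by
      show pm j - c j - (profit (owner j) pm + |w' j (pm j)|⁻¹) = _
      rw [← hf0, ← ht0, hprofeq, habs]
    -- the derivative in sign-revealing form
    have hdeq : ((Real.exp (w j t0 + v j) * w' j t0 * (t0 - c j)
            + Real.exp (w j t0 + v j) * 1) * B * (C0 + Real.exp (w j t0 + v j))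
          - (Real.exp (w j t0 + v j) * (t0 - c j) + A) * B
              * (Real.exp (w j t0 + v j) * w' j t0))
          / (C0 + Real.exp (w j t0 + v j)) ^ 2
        = B * Real.exp (w j t0 + v j) * w' j t0 * φ pm j
            / (C0 + Real.exp (w j t0 + v j)) := by
      rw [hphi]
      exact aux_deriv_eq _ _ _ _ _ _ _ hDvpos.ne' hwj.ne
    rw [hdeq] at hgd
    have hBpos : 0 < B :=
      Finset.prod_pos (fun f hf => hepm f (Finset.mem_of_mem_erase hf))
    have hXpos : 0 < Real.exp (w j t0 + v j) := Real.exp_pos _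
    have hupdK : ∀ t : ℝ, c j ≤ t → t ≤ pbar j → Function.update pm j t ∈ K := by
      intro t h1 h2
      refine ⟨fun k => ?_, fun k => ?_⟩ <;> rcases eq_or_ne k j with rfl | hkj
      · rw [Function.update_self]; exact h1
      · rw [Function.update_of_ne hkj]; exact hpmK.1 k
      · rw [Function.update_self]; exact h2
      · rw [Function.update_of_ne hkj]; exact hpmK.2 k
    have hGat : G (Function.update pm j t0) = G pm := by
      rw [ht0, Function.update_eq_self]
    -- case analysis on the position of pm j in [c j, pbar j]
    rcases eq_or_lt_of_le (hpmK.1 j : c j ≤ pm j) with hlow | hlow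
    · -- pm j = c j : derivative is positive, contradicting maximality
      exfalso
      have hφneg : φ pm j < 0 := part1 pm (fun k => hpmK.1 k) j hlow.symm
      have hdpos : 0 < B * Real.exp (w j t0 + v j) * w' j t0 * φ pm j
          / (C0 + Real.exp (w j t0 + v j)) := by
        apply div_pos _ hDvpos
        have h1 : 0 < w' j t0 * φ pm j := mul_pos_of_neg_of_neg hwj hφneg
        nlinarith [mul_pos (mul_pos hBpos hXpos) h1]
      have hslope := hasDerivAt_iff_tendsto_slope.1 hgd
      have hmono : nhdsWithin t0 (Set.Ioi t0) ≤ nhdsWithin t0 {t0}ᶜ :=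
        nhdsWithin_mono t0 (fun x hx => Set.mem_compl_singleton_iff.2 (ne_of_gt hx))
      have hev1 : ∀ᶠ t in nhdsWithin t0 (Set.Ioi t0),
          0 < slope (fun t => G (Function.update pm j t)) t0 t :=
        (hslope.eventually (eventually_gt_nhds hdpos)).filter_mono hmono
      have ht0lt : t0 < pbar j := by rw [ht0, ← hlow]; exact hpbarc j
      have hev2 : ∀ᶠ t in nhdsWithin t0 (Set.Ioi t0), t ∈ Set.Ioo t0 (pbar j) :=
        Filter.eventually_of_mem (Ioo_mem_nhdsGT_of_mem ⟨le_refl t0, ht0lt⟩)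
          (fun t ht => ht)
      obtain ⟨t, hts, htI⟩ := (hev1.and hev2).exists
      have hε : 0 < t - t0 := sub_pos.2 htI.1
      rw [slope_def_field] at hts
      have hmul := mul_pos hts hε
      rw [div_mul_cancel₀ _ hε.ne'] at hmul
      have ht0c : t0 = c j := ht0.trans hlow.symm
      have hKt : Function.update pm j t ∈ K :=
        hupdK t (by rw [← ht0c]; exact htI.1.le) htI.2.le
      have hle' : G (Function.update pm j t) ≤ G pm := hpmmax hKt
      have hmul' : 0 < G (Function.update pm j t) - G (Function.update pm j t0) := hmul
      rw [hGat] at hmul'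
      linarith
    rcases eq_or_lt_of_le (hpmK.2 j : pm j ≤ pbar j) with hupp | hupp
    · -- pm j = pbar j : derivative is negative, contradicting maximality
      exfalso
      have hφpos : 0 < φ pm j :=
        part2 pm (fun k => ((hc k).le.trans (hpmK.1 k))) j hupp.ge
      have hdneg : B * Real.exp (w j t0 + v j) * w' j t0 * φ pm j
          / (C0 + Real.exp (w j t0 + v j)) < 0 := by
        apply div_neg_of_neg_of_pos _ hDvpos
        have h1 : w' j t0 * φ pm j < 0 := mul_neg_of_neg_of_pos hwj hφpos
        nlinarith [mul_pos hBpos hXpos]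
      have hslope := hasDerivAt_iff_tendsto_slope.1 hgd
      have hmono : nhdsWithin t0 (Set.Iio t0) ≤ nhdsWithin t0 {t0}ᶜ :=
        nhdsWithin_mono t0 (fun x hx => Set.mem_compl_singleton_iff.2 (ne_of_lt hx))
      have hev1 : ∀ᶠ t in nhdsWithin t0 (Set.Iio t0),
          slope (fun t => G (Function.update pm j t)) t0 t < 0 :=
        (hslope.eventually (eventually_lt_nhds hdneg)).filter_mono hmono
      have ht0gt : c j < t0 := by rw [ht0]; exact hlow
      have hev2 : ∀ᶠ t in nhdsWithin t0 (Set.Iio t0), t ∈ Set.Ioo (c j) t0 :=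
        Filter.eventually_of_mem (Ioo_mem_nhdsLT_of_mem ⟨ht0gt, le_refl t0⟩)
          (fun t ht => ht)
      obtain ⟨t, hts, htI⟩ := (hev1.and hev2).exists
      have hε : t - t0 < 0 := sub_neg.2 htI.2
      rw [slope_def_field] at hts
      have hmul := mul_pos_of_neg_of_neg hts hε
      rw [div_mul_cancel₀ _ hε.ne] at hmul
      have ht0c : t0 = pbar j := ht0.trans hupp
      have hKt : Function.update pm j t ∈ K :=
        hupdK t htI.1.le (by rw [← ht0c]; exact htI.2.le)
      have hle' : G (Function.update pm j t) ≤ G pm := hpmmax hKt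
      have hmul' : 0 < G (Function.update pm j t) - G (Function.update pm j t0) := hmul
      rw [hGat] at hmul'
      linarith
    · -- interior: derivative vanishes, hence φ pm j = 0
      have hloc : IsLocalMax (fun t => G (Function.update pm j t)) t0 := by
        have hmem : Set.Icc (c j) (pbar j) ∈ nhds t0 := Icc_mem_nhds hlow hupp
        apply Filter.eventually_of_mem hmem
        intro t ht
        have := hpmmax (hupdK t ht.1 ht.2)
        rw [← hGat] at this
        exact this
      have hzero := hloc.hasDerivAt_eq_zero hgd
      have hφ0 : φ pm j = 0 := by
        have hne : B * Real.exp (w j t0 + v j) * w' j t0 ≠ 0 :=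
          mul_ne_zero (mul_ne_zero hBpos.ne' hXpos.ne') hwj.ne
        have h1 : B * Real.exp (w j t0 + v j) * w' j t0 * φ pm j = 0 := by
          have := hzero
          rw [div_eq_zero_iff] at this
          rcases this with h | h
          · exact h
          · exact absurd h hDvpos.ne'
        exact (mul_eq_zero.1 h1).resolve_left hne
      exact ⟨⟨hlow, hupp⟩, hφ0⟩
  exact ⟨pm, fun j => (main j).1, fun j => (main j).2⟩
end

section
/- Let κ_1 < ⋯ < κ_N be positive reals, let P_1,...,P_N ∈ (0,1) with Σ_n P_n < 1, and define θ(α) = Σ_{n=1}^N (κ_n/(α + κ_n)) P_n for α ∉ {-κ_1,...,-κ_N}. Then the equation θ(α) = 1 has exactly N real solutions: exactly one in each interval (-κ_{n+1}, -κ_n) for n = 1,...,N-1, one in (-κ_1, 0), and no solutions with α ≥ 0 or α < -κ_N. In particular all solutions are negative, so the corresponding eigenvalues μ = 1/(1-α) are all positive. -/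
open Filter Set Topology

/-!
Each term `κ n P n / (α + κ n)` is a hyperbola with pole at `-κ n`, so `θ` is continuous and
strictly decreasing on every interval free of poles, tends to `+∞` just right of each pole and to
`-∞` just left of it. By the intermediate value theorem `θ` therefore takes the value `1` exactly
once between consecutive poles, and once on `(-κ 1, 0)` because `θ 0 = ∑ P n < 1`. For `α ≥ 0`
every term is at most `P n`, so `θ α ≤ ∑ P n < 1`, and to the left of all poles every term is
negative.
-/

theorem IsPreconnected.existsUnique_eq_of_injOn {X α : Type*} [TopologicalSpace X] [LinearOrder α]
    [TopologicalSpace α] [OrderClosedTopology α] {s : Set X} {f : X → α} {a b : X} {y : α}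
    (hs : IsPreconnected s) (hf : ContinuousOn f s) (hinj : InjOn f s) (ha : a ∈ s) (hb : b ∈ s)
    (hy : y ∈ Icc (f a) (f b)) : ∃! x, x ∈ s ∧ f x = y := by
  obtain ⟨x, hx, rfl⟩ := hs.intermediate_value ha hb hf hy
  exact ⟨x, ⟨hx, rfl⟩, fun z hz => hinj hz.1 hx hz.2⟩

theorem div_lt_div_of_pos_of_mul_pos {c x y : ℝ} (hc : 0 < c) (hxy : x < y) (hsgn : 0 < x * y) :
    c / y < c / x := by
  have key : c / y - c / x = c * (x - y) / (x * y) := by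
    field_simp [(mul_ne_zero_iff.1 hsgn.ne').1, (mul_ne_zero_iff.1 hsgn.ne').2]
  have : c * (x - y) / (x * y) < 0 := div_neg_of_neg_of_pos (by nlinarith) hsgn
  linarith

theorem StrictMono.notMem_Ioo_succ {β : Type*} [Preorder β] {N : ℕ} {κ : Fin N → β}
    (hκ : StrictMono κ) (n m : Fin N) (h : (n : ℕ) + 1 < N) :
    κ m ∉ Ioo (κ n) (κ ⟨n + 1, h⟩) := by
  rintro ⟨hnm, hm⟩
  have h₁ : n < m := hκ.lt_iff_lt.1 hnm
  have h₂ : m < ⟨n + 1, h⟩ := hκ.lt_iff_lt.1 hm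
  rw [Fin.lt_def] at h₁ h₂
  simp only at h₂
  omega

section Theta

variable {ι : Type*} (κ P : ι → ℝ)

noncomputable def theta [Fintype ι] (α : ℝ) : ℝ := ∑ n, κ n / (α + κ n) * P n

theorem continuousAt_sum_div_add_mul {s : Finset ι} {x : ℝ} (hx : ∀ m ∈ s, x + κ m ≠ 0) :
    ContinuousAt (fun α => ∑ n ∈ s, κ n / (α + κ n) * P n) x :=
  tendsto_finsetSum s fun m hm =>
    ((continuousAt_const.div (continuousAt_id.add continuousAt_const) (hx m hm)).mul
      continuousAt_const)

theorem theta_continuousAt [Fintype ι] {x : ℝ} (hx : ∀ m, x ≠ -κ m) :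
    ContinuousAt (theta κ P) x :=
  continuousAt_sum_div_add_mul κ P fun m _ h => hx m (eq_neg_of_add_eq_zero_left h)

theorem theta_continuousOn [Fintype ι] {s : Set ℝ} (hs : ∀ m, -κ m ∉ s) :
    ContinuousOn (theta κ P) s :=
  fun _ hx => (theta_continuousAt κ P fun m h => hs m (h ▸ hx)).continuousWithinAt

theorem theta_strictAntiOn [Fintype ι] [Nonempty ι] (hκ : ∀ n, 0 < κ n) (hP : ∀ n, 0 < P n)
    {s : Set ℝ} (hs : s.OrdConnected) (hpole : ∀ m, -κ m ∉ s) : StrictAntiOn (theta κ P) s := by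
  intro a ha b hb hab
  refine Finset.sum_lt_sum_of_nonempty Finset.univ_nonempty fun m _ => ?_
  have hsgn : 0 < (a + κ m) * (b + κ m) := by
    by_contra! h
    exact hpole m (hs.out ha hb ⟨by nlinarith, by nlinarith⟩)
  exact mul_lt_mul_of_pos_right
    (div_lt_div_of_pos_of_mul_pos (hκ m) (by linarith) hsgn) (hP m)

theorem theta_eq_add_sum_erase [Fintype ι] [DecidableEq ι] (j : ι) (α : ℝ) :
    theta κ P α =
      κ j * P j * (α + κ j)⁻¹ + ∑ n ∈ Finset.univ.erase j, κ n / (α + κ n) * P n := by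
  rw [theta, ← Finset.add_sum_erase _ _ (Finset.mem_univ j), div_eq_mul_inv]
  ring

theorem continuousAt_sum_erase_pole [Fintype ι] [DecidableEq ι] (hκ : Function.Injective κ)
    (j : ι) :
    ContinuousAt (fun α => ∑ n ∈ Finset.univ.erase j, κ n / (α + κ n) * P n) (-κ j) :=
  continuousAt_sum_div_add_mul κ P fun m hm h =>
    Finset.ne_of_mem_erase hm (hκ (by linarith))

theorem tendsto_theta_nhdsGT [Fintype ι] (hκ : Function.Injective κ) {j : ι} (hκj : 0 < κ j)
    (hPj : 0 < P j) : Tendsto (theta κ P) (𝓝[>] (-κ j)) atTop := by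
  classical
  have hshift : Tendsto (· + κ j) (𝓝[>] (-κ j)) (𝓝[>] 0) := by
    refine tendsto_nhdsWithin_iff.2 ⟨?_, eventually_nhdsWithin_of_forall fun x hx => ?_⟩
    · simpa using ((continuous_add_const (κ j)).tendsto (-κ j)).mono_left nhdsWithin_le_nhds
    · simpa [neg_lt_iff_pos_add] using hx
  simp_rw [funext (theta_eq_add_sum_erase κ P j)]
  exact ((tendsto_inv_nhdsGT_zero.comp hshift).const_mul_atTop (mul_pos hκj hPj)).atTop_add
    ((continuousAt_sum_erase_pole κ P hκ j).tendsto.mono_left nhdsWithin_le_nhds)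

theorem tendsto_theta_nhdsLT [Fintype ι] (hκ : Function.Injective κ) {j : ι} (hκj : 0 < κ j)
    (hPj : 0 < P j) : Tendsto (theta κ P) (𝓝[<] (-κ j)) atBot := by
  classical
  have hshift : Tendsto (· + κ j) (𝓝[<] (-κ j)) (𝓝[<] 0) := by
    refine tendsto_nhdsWithin_iff.2 ⟨?_, eventually_nhdsWithin_of_forall fun x hx => ?_⟩
    · simpa using ((continuous_add_const (κ j)).tendsto (-κ j)).mono_left nhdsWithin_le_nhds
    · simpa [lt_neg_iff_add_neg] using hx
  simp_rw [funext (theta_eq_add_sum_erase κ P j)]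
  exact ((tendsto_inv_nhdsLT_zero.comp hshift).const_mul_atBot (mul_pos hκj hPj)).atBot_add
    ((continuousAt_sum_erase_pole κ P hκ j).tendsto.mono_left nhdsWithin_le_nhds)

theorem theta_zero [Fintype ι] (hκ : ∀ n, κ n ≠ 0) : theta κ P 0 = ∑ n, P n :=
  Finset.sum_congr rfl fun n _ => by rw [zero_add, div_self (hκ n), one_mul]

theorem theta_le_sum [Fintype ι] (hκ : ∀ n, 0 < κ n) (hP : ∀ n, 0 ≤ P n) {α : ℝ}
    (hα : 0 ≤ α) : theta κ P α ≤ ∑ n, P n :=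
  Finset.sum_le_sum fun n _ => mul_le_of_le_one_left (hP n)
    ((div_le_one (by linarith [hκ n])).2 (by linarith))

theorem theta_neg [Fintype ι] [Nonempty ι] (hκ : ∀ n, 0 < κ n) (hP : ∀ n, 0 < P n)
    {α : ℝ} (hα : ∀ n, α < -κ n) : theta κ P α < 0 :=
  Finset.sum_neg (fun n _ => mul_neg_of_neg_of_pos
    (div_neg_of_pos_of_neg (hκ n) (by linarith [hα n])) (hP n)) Finset.univ_nonempty

theorem theta_existsUnique_eq_one [Fintype ι] (hκ : ∀ n, 0 < κ n) (hP : ∀ n, 0 < P n)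
    (hinj : Function.Injective κ) {j : ι} {r : ℝ} (hr : -κ j < r)
    (hpole : ∀ m, -κ m ∉ Ioo (-κ j) r) (hlt : ∀ᶠ x in 𝓝[<] r, theta κ P x < 1) :
    ∃! α, α ∈ Ioo (-κ j) r ∧ theta κ P α = 1 := by
  have : Nonempty ι := ⟨j⟩
  obtain ⟨a, hθa, ha⟩ :=
    (((tendsto_theta_nhdsGT κ P hinj (hκ j) (hP j)).eventually_gt_atTop 1).and
      (Ioo_mem_nhdsGT hr)).exists
  obtain ⟨b, hθb, hb⟩ := (hlt.and (Ioo_mem_nhdsLT hr)).exists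
  exact isPreconnected_Ioo.existsUnique_eq_of_injOn (theta_continuousOn κ P hpole)
    (theta_strictAntiOn κ P hκ hP ordConnected_Ioo hpole).injOn hb ha ⟨hθb.le, hθa.le⟩

end Theta

theorem stmt_13 {N : ℕ} (hN : 0 < N) (κ P : Fin N → ℝ)
    (hκpos : ∀ n, 0 < κ n) (hκmono : StrictMono κ)
    (hP : ∀ n, 0 < P n ∧ P n < 1) (hsum : ∑ n, P n < 1) :
    let θ : ℝ → ℝ := fun α => ∑ n, (κ n / (α + κ n)) * P n
    -- exactly one solution in each interval (-κ_{n+1}, -κ_n)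
    (∀ n : Fin N, ∀ h : (n : ℕ) + 1 < N,
      ∃! α, α ∈ Set.Ioo (-(κ ⟨(n : ℕ) + 1, h⟩)) (-(κ n)) ∧ θ α = 1) ∧
    -- exactly one solution in (-κ_1, 0)
    (∃! α, α ∈ Set.Ioo (-(κ ⟨0, hN⟩)) 0 ∧ θ α = 1) ∧
    -- no solutions with α ≥ 0
    (∀ α, 0 ≤ α → θ α ≠ 1) ∧
    -- no solutions with α < -κ_N
    (∀ α, α < -(κ ⟨N - 1, by omega⟩) → θ α ≠ 1) ∧
    -- all solutions are negative, so μ = 1/(1-α) > 0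
    (∀ α, (∀ n, α ≠ -(κ n)) → θ α = 1 → α < 0 ∧ 0 < (1 - α)⁻¹) := by
  intro θ
  have : Nonempty (Fin N) := ⟨⟨0, hN⟩⟩
  have hP₀ : ∀ n, 0 < P n := fun n => (hP n).1
  have hnonneg : ∀ α, 0 ≤ α → θ α ≠ 1 := fun α hα =>
    ((theta_le_sum κ P hκpos (fun n => (hP₀ n).le) hα).trans_lt hsum).ne
  refine ⟨fun n h => ?_, ?_, hnonneg, fun α hα => ?_, fun α _ hθ => ?_⟩
  · refine theta_existsUnique_eq_one κ P hκpos hP₀ hκmono.injective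
      (neg_lt_neg (hκmono (Fin.lt_def.2 (Nat.lt_succ_self n)))) (fun m hm => ?_)
      ((tendsto_theta_nhdsLT κ P hκmono.injective (hκpos n) (hP₀ n)).eventually_lt_atBot 1)
    exact hκmono.notMem_Ioo_succ n m h ⟨neg_lt_neg_iff.1 hm.2, neg_lt_neg_iff.1 hm.1⟩
  · have hθ₀ : θ 0 < 1 := (theta_zero κ P fun n => (hκpos n).ne').trans_lt hsum
    refine theta_existsUnique_eq_one κ P hκpos hP₀ hκmono.injective
      (neg_lt_zero.2 (hκpos _)) (fun m hm => ?_) ?_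
    · exact not_lt.2 (hκmono.monotone (Fin.le_def.2 (Nat.zero_le m))) (neg_lt_neg_iff.1 hm.1)
    · have hcont : ContinuousAt θ 0 := theta_continuousAt κ P fun n => (neg_lt_zero.2 (hκpos n)).ne'
      exact (hcont.tendsto.eventually_lt_const hθ₀).filter_mono nhdsWithin_le_nhds
  · exact (theta_neg κ P hκpos hP₀ fun n => hα.trans_le
      (neg_le_neg (hκmono.monotone (Fin.le_def.2 (Nat.le_sub_one_of_lt n.isLt))))).trans
      zero_lt_one |>.ne
  · have hα : α < 0 := not_le.1 fun h => hnonneg α h hθ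
    exact ⟨hα, inv_pos.2 (by linarith)⟩
end

section
/- Portfolio effect: under the Logit model with constant unit costs and sub-quadratic second derivatives, let p ∈ (0,∞)^J be equilibrium prices and suppose two distinct firms f and g offer products j ∈ J_f and k ∈ J_g with identical characteristics (hence w_j = w_k) and identical unit costs c_j = c_k. Then p_j > p_k if and only if π̂_f(p) > π̂_g(p), p_j = p_k if and only if π̂_f(p) = π̂_g(p), and p_j < p_k if and only if π̂_f(p) < π̂_g(p). -/
open Filter Set

noncomputable def logitP19 {J : ℕ} (w : Fin J → ℝ → ℝ) (v : Fin J → ℝ) (θ : ℝ)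
    (p : Fin J → ℝ) (j : Fin J) : ℝ :=
  Real.exp (w j (p j) + v j) / (Real.exp θ + ∑ k, Real.exp (w k (p k) + v k))

noncomputable def firmProfit19 {J F : ℕ} (w : Fin J → ℝ → ℝ) (v : Fin J → ℝ)
    (θ : ℝ) (c : Fin J → ℝ) (owner : Fin J → Fin F) (g : Fin F)
    (p : Fin J → ℝ) : ℝ :=
  ∑ j ∈ Finset.univ.filter (fun j => owner j = g),
    logitP19 w v θ p j * (p j - c j)

open Real

/-
At an equilibrium, moving one price `p j` while holding all others fixed changes only one
Logit share in the firm's profit `π = N / D`, so the first-order condition `N' D = N D'` reduces to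
the markup equation `p j + 1 / w'_j(p j) = c j + π_f(p)`. For products with the same `w'` and
cost, both sides of the comparison are values of the single map `x ↦ x + 1 / w'(x)`, whose
derivative `1 - w'' / w'^2` is positive, so the order of `p j, p k` is that of `π_f, π_g`.
-/

theorem firmProfit19_update_eq {J F : ℕ} (w : Fin J → ℝ → ℝ) (v : Fin J → ℝ) (θ : ℝ)
    (c : Fin J → ℝ) (owner : Fin J → Fin F) (p : Fin J → ℝ) (j : Fin J) :
    ∃ A B : ℝ, 0 < B ∧ ∀ t : ℝ,
      firmProfit19 w v θ c owner (owner j) (Function.update p j t) =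
        (exp (w j t + v j) * (t - c j) + A) / (B + exp (w j t + v j)) := by
  classical
  set S := Finset.univ.filter (fun i => owner i = owner j)
  have hjS : j ∈ S := by simp [S]
  refine ⟨∑ i ∈ S.erase j, exp (w i (p i) + v i) * (p i - c i),
    exp θ + ∑ i ∈ Finset.univ.erase j, exp (w i (p i) + v i), by positivity, fun t => ?_⟩
  have hden : ∑ i, exp (w i (Function.update p j t i) + v i) =
      ∑ i ∈ Finset.univ.erase j, exp (w i (p i) + v i) + exp (w j t + v j) := by
    rw [← Finset.sum_erase_add _ _ (Finset.mem_univ j), Function.update_self]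
    refine congrArg (· + _) (Finset.sum_congr rfl fun i hi => ?_)
    rw [Function.update_of_ne (Finset.ne_of_mem_erase hi)]
  have hnum : ∑ i ∈ S, exp (w i (Function.update p j t i) + v i) *
      (Function.update p j t i - c i) =
      exp (w j t + v j) * (t - c j) + ∑ i ∈ S.erase j, exp (w i (p i) + v i) * (p i - c i) := by
    rw [← Finset.add_sum_erase _ _ hjS, Function.update_self]
    refine congrArg _ (Finset.sum_congr rfl fun i hi => ?_)
    rw [Function.update_of_ne (Finset.ne_of_mem_erase hi)]
  rw [add_assoc, ← hden, ← hnum, Finset.sum_div]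
  refine Finset.sum_congr rfl fun i _ => ?_
  rw [logitP19, div_mul_eq_mul_div]

theorem add_one_div_eq_of_isLocalMax_logit_profit {u : ℝ → ℝ} {u' x c A B : ℝ}
    (hu : HasDerivAt u u' x) (hu' : u' ≠ 0) (hB : 0 ≤ B)
    (hmax : IsLocalMax (fun t => (exp (u t) * (t - c) + A) / (B + exp (u t))) x) :
    x + 1 / u' = c + (exp (u x) * (x - c) + A) / (B + exp (u x)) := by
  have he : 0 < exp (u x) := exp_pos _
  have hD : B + exp (u x) ≠ 0 := by positivity
  have hderiv := ((hu.exp.mul ((hasDerivAt_id x).sub_const c)).add_const A).div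
    (hu.exp.const_add B) hD
  have hzero := hmax.hasDerivAt_eq_zero hderiv
  simp only [id, Pi.mul_apply, div_eq_zero_iff, pow_eq_zero_iff, ne_eq, OfNat.ofNat_ne_zero,
    not_false_eq_true, hD, or_false] at hzero
  field_simp
  have hfoc : exp (u x) *
      ((u' * (x - c) + 1) * (B + exp (u x)) - (exp (u x) * (x - c) + A) * u') = 0 := by
    linear_combination hzero
  linear_combination (mul_eq_zero.mp hfoc).resolve_left he.ne'

theorem add_one_div_eq_firmProfit19_of_best_response {J F : ℕ} (w : Fin J → ℝ → ℝ)
    (v : Fin J → ℝ) (θ : ℝ) (c : Fin J → ℝ) (owner : Fin J → Fin F) (p : Fin J → ℝ)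
    (hp : ∀ i, 0 < p i) (j : Fin J)
    (hmax : ∀ q : Fin J → ℝ, (∀ i, owner i ≠ owner j → q i = p i) → (∀ i, 0 ≤ q i) →
      firmProfit19 w v θ c owner (owner j) q ≤ firmProfit19 w v θ c owner (owner j) p)
    {d : ℝ} (hd : HasDerivAt (w j) d (p j)) (hd0 : d ≠ 0) :
    p j + 1 / d = c j + firmProfit19 w v θ c owner (owner j) p := by
  obtain ⟨A, B, hB, hprofit⟩ := firmProfit19_update_eq w v θ c owner p j
  have hself := hprofit (p j)
  rw [Function.update_eq_self] at hself
  rw [hself]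
  refine add_one_div_eq_of_isLocalMax_logit_profit (hd.add_const (v j)) hd0 hB.le ?_
  filter_upwards [eventually_gt_nhds (hp j)] with t ht
  rw [← hprofit, ← hself]
  refine hmax _ (fun i hi => Function.update_of_ne (by rintro rfl; exact hi rfl) _ _) fun i => ?_
  rcases eq_or_ne i j with rfl | hij
  · simpa using ht.le
  · simpa [Function.update_of_ne hij] using (hp i).le

theorem strictMonoOn_add_inv {s : Set ℝ} (hs : Convex ℝ s) (hso : IsOpen s) {f f' : ℝ → ℝ}
    (hf : ∀ x ∈ s, HasDerivAt f (f' x) x) (hf0 : ∀ x ∈ s, f x ≠ 0)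
    (hf' : ∀ x ∈ s, f' x / f x ^ 2 < 1) :
    StrictMonoOn (fun x => x + (f x)⁻¹) s := by
  have hderiv : ∀ x ∈ s, HasDerivAt (fun x => x + (f x)⁻¹) (1 - f' x / f x ^ 2) x := by
    intro x hx
    have h := (hasDerivAt_id' x).add ((hf x hx).inv (hf0 x hx))
    rwa [neg_div, ← sub_eq_add_neg] at h
  refine strictMonoOn_of_deriv_pos hs (fun x hx => (hderiv x hx).continuousAt.continuousWithinAt)
    fun x hx => ?_
  rw [hso.interior_eq] at hx
  rw [(hderiv x hx).deriv, sub_pos]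
  exact hf' x hx

theorem stmt_19_general {J F : ℕ} (w w' w'' : Fin J → ℝ → ℝ) (v : Fin J → ℝ) (θ : ℝ)
    (c : Fin J → ℝ) (owner : Fin J → Fin F)
    (hd1 : ∀ k : Fin J, ∀ x > (0:ℝ), HasDerivAt (w k) (w' k x) x)
    (hd2 : ∀ k : Fin J, ∀ x > (0:ℝ), HasDerivAt (w' k) (w'' k x) x)
    (hneg : ∀ k : Fin J, ∀ x > (0:ℝ), w' k x < 0)
    -- sub-quadratic second derivatives
    (hsq : ∀ k : Fin J, ∀ x > (0:ℝ), w'' k x / (w' k x) ^ 2 < 1)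
    -- equilibrium prices p ∈ (0,∞)^J : each firm maximizes its own profit
    (p : Fin J → ℝ) (hp : ∀ i, 0 < p i)
    (heq : ∀ g : Fin F, ∀ q : Fin J → ℝ,
      (∀ i, owner i ≠ g → q i = p i) → (∀ i, 0 ≤ q i) →
      firmProfit19 w v θ c owner g q ≤ firmProfit19 w v θ c owner g p)
    (j k : Fin J)
    (hwjk' : w' j = w' k) (hcjk : c j = c k) :
    (p j > p k ↔
      firmProfit19 w v θ c owner (owner j) p > firmProfit19 w v θ c owner (owner k) p) ∧
    (p j = p k ↔
      firmProfit19 w v θ c owner (owner j) p = firmProfit19 w v θ c owner (owner k) p) ∧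
    (p j < p k ↔
      firmProfit19 w v θ c owner (owner j) p < firmProfit19 w v θ c owner (owner k) p) := by
  have hT := strictMonoOn_add_inv (convex_Ioi 0) isOpen_Ioi (hd2 j)
    (fun x hx => (hneg j x hx).ne) (hsq j)
  have hj := add_one_div_eq_firmProfit19_of_best_response w v θ c owner p hp j (heq (owner j))
    (hd1 j _ (hp j)) (hneg j _ (hp j)).ne
  have hk := add_one_div_eq_firmProfit19_of_best_response w v θ c owner p hp k (heq (owner k))
    (hd1 k _ (hp k)) (hneg k _ (hp k)).ne
  rw [← hwjk', ← hcjk] at hk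
  rw [one_div] at hj hk
  refine ⟨?_, ?_, ?_⟩
  · rw [gt_iff_lt, gt_iff_lt, ← hT.lt_iff_lt (hp k) (hp j), hj, hk, add_lt_add_iff_left]
  · rw [← hT.eq_iff_eq (hp j) (hp k), hj, hk, add_right_inj]
  · rw [← hT.lt_iff_lt (hp j) (hp k), hj, hk, add_lt_add_iff_left]

theorem stmt_19 {J F : ℕ} (w w' w'' : Fin J → ℝ → ℝ) (v : Fin J → ℝ) (θ : ℝ)
    (c : Fin J → ℝ) (owner : Fin J → Fin F) (hc : ∀ i, 0 ≤ c i)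
    (hd1 : ∀ k : Fin J, ∀ x > (0:ℝ), HasDerivAt (w k) (w' k x) x)
    (hd2 : ∀ k : Fin J, ∀ x > (0:ℝ), HasDerivAt (w' k) (w'' k x) x)
    (hneg : ∀ k : Fin J, ∀ x > (0:ℝ), w' k x < 0)
    -- sub-quadratic second derivatives
    (hsq : ∀ k : Fin J, ∀ x > (0:ℝ), w'' k x / (w' k x) ^ 2 < 1)
    -- equilibrium prices p ∈ (0,∞)^J : each firm maximizes its own profit
    (p : Fin J → ℝ) (hp : ∀ i, 0 < p i)
    (heq : ∀ g : Fin F, ∀ q : Fin J → ℝ,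
      (∀ i, owner i ≠ g → q i = p i) → (∀ i, 0 ≤ q i) →
      firmProfit19 w v θ c owner g q ≤ firmProfit19 w v θ c owner g p)
    (j k : Fin J) (hfg : owner j ≠ owner k)
    (hwjk : w j = w k) (hwjk' : w' j = w' k) (hcjk : c j = c k) :
    (p j > p k ↔
      firmProfit19 w v θ c owner (owner j) p > firmProfit19 w v θ c owner (owner k) p) ∧
    (p j = p k ↔
      firmProfit19 w v θ c owner (owner j) p = firmProfit19 w v θ c owner (owner k) p) ∧
    (p j < p k ↔
      firmProfit19 w v θ c owner (owner j) p < firmProfit19 w v θ c owner (owner k) p) :=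
  stmt_19_general w w' w'' v θ c owner hd1 hd2 hneg hsq p hp heq j k hwjk' hcjk
end
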